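/- If every identity Y-sequence d ∈ Υ belongs to WDom_Υ(𝔘), then Π̃ = 𝔘̂ (the generalized module of identities coincides with the subgroup generated by the images of the insertions). -/

import Mathlib

universe u

namespace Wh

variable {X : Type u}

/-- The set of symbols `(ᵘr)^ε` for a presentation with relators `rels`:
`u` is a word of the free group, `r` a relator and `eps` the sign (`true` for `+1`). -/
structure Sym (X : Type u) (rels : Set (FreeGroup X)) where
  u : FreeGroup X
  r : rels
  eps : Bool

variable {rels : Set (FreeGroup X)}

/-- The formal inverse `(ᵘr)^{-ε}` of a symbol `(ᵘr)^ε`. -/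
def Sym.symInv (a : Sym X rels) : Sym X rels := ⟨a.u, a.r, !a.eps⟩

/-- `θ((ᵘr)^ε) = u r^ε u⁻¹`. -/
def Sym.theta (a : Sym X rels) : FreeGroup X :=
  a.u * (if a.eps then (a.r : FreeGroup X) else (a.r : FreeGroup X)⁻¹) * a.u⁻¹

/-- The conjugate `ᵛ((ᵘr)^ε) = (^{vu}r)^ε`. -/
def Sym.conj (v : FreeGroup X) (a : Sym X rels) : Sym X rels := ⟨v * a.u, a.r, a.eps⟩

/-- The defining relations of the monoid `Υ` : `a ⬝ b = (^{θ(a)}b) ⬝ a`. -/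
def upsRel (rels : Set (FreeGroup X)) :
    FreeMonoid (Sym X rels) → FreeMonoid (Sym X rels) → Prop := fun x y =>
  ∃ a b : Sym X rels, x = FreeMonoid.of a * FreeMonoid.of b ∧
    y = FreeMonoid.of (Sym.conj (Sym.theta a) b) * FreeMonoid.of a

/-- The congruence on the free monoid on `Z` generated by the defining relations of `Υ`. -/
def upsCon (rels : Set (FreeGroup X)) : Con (FreeMonoid (Sym X rels)) := conGen (upsRel rels)

/-- The monoid `Υ` presented on `Z` by the relations `a ⬝ b = (^{θ(a)}b) ⬝ a`. -/
abbrev Ups (rels : Set (FreeGroup X)) := (upsCon rels).Quotient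

/-- The canonical epimorphism `σ : FM(Z) → Υ`. -/
def sigma (rels : Set (FreeGroup X)) : FreeMonoid (Sym X rels) →* Ups rels := (upsCon rels).mk'

/-- The submonoid `𝔘` of `Υ` generated by the elements `σ(a)σ(a⁻¹)`, `a ∈ Z`. -/
def UU (rels : Set (FreeGroup X)) : Submonoid (Ups rels) :=
  Submonoid.closure
    {x | ∃ a : Sym X rels, x = sigma rels (FreeMonoid.of a * FreeMonoid.of a.symInv)}

/-- The monoid homomorphism `θ̄ : Υ → F` induced by `θ`. -/
def thetaBar (rels : Set (FreeGroup X)) : Ups rels →* FreeGroup X :=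
  (upsCon rels).lift (FreeMonoid.lift Sym.theta) (by
    apply Con.conGen_le.2
    rintro x y ⟨a, b, rfl, rfl⟩
    simp only [Con.ker_rel, map_mul, FreeMonoid.lift_eval_of]
    simp only [Sym.theta, Sym.conj]
    group)

/-- The relators of the group `𝒢(Υ)` : `a ⬝ b ⬝ ι((^{θ(a)}b) ⬝ a)`. -/
def grels (rels : Set (FreeGroup X)) : Set (FreeGroup (Sym X rels)) :=
  {x | ∃ a b : Sym X rels, x = FreeGroup.of a * FreeGroup.of b *
      (FreeGroup.of (Sym.conj (Sym.theta a) b) * FreeGroup.of a)⁻¹}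

/-- The universal enveloping group `𝒢(Υ)`. -/
abbrev GUps (rels : Set (FreeGroup X)) := PresentedGroup (grels rels)

/-- The canonical monoid homomorphism `μ : Υ → 𝒢(Υ)`. -/
def mu (rels : Set (FreeGroup X)) : Ups rels →* GUps rels :=
  (upsCon rels).lift (FreeMonoid.lift fun a => (PresentedGroup.of a : GUps rels)) (by
    apply Con.conGen_le.2
    rintro x y ⟨a, b, rfl, rfl⟩
    simp only [Con.ker_rel, map_mul, FreeMonoid.lift_eval_of]
    have h2 : (QuotientGroup.mk (FreeGroup.of a * FreeGroup.of b *
        (FreeGroup.of (Sym.conj (Sym.theta a) b) * FreeGroup.of a)⁻¹) : GUps rels) = 1 :=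
      (QuotientGroup.eq_one_iff _).2 (Subgroup.subset_normalClosure ⟨a, b, rfl⟩)
    rw [QuotientGroup.mk_mul, QuotientGroup.mk_inv, QuotientGroup.mk_mul,
      QuotientGroup.mk_mul, mul_inv_eq_one] at h2
    exact h2)

/-- The subgroup `𝔘̂` of `𝒢(Υ)` generated by `μ(𝔘)`. -/
def UUhat (rels : Set (FreeGroup X)) : Subgroup (GUps rels) :=
  Subgroup.closure (mu rels '' (UU rels : Set (Ups rels)))

/-- The group homomorphism `θ̃ : 𝒢(Υ) → F` induced by `θ`. -/
def thetaTilde (rels : Set (FreeGroup X)) : GUps rels →* FreeGroup X :=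
  PresentedGroup.toGroup (f := Sym.theta) (by
    rintro x ⟨a, b, rfl⟩
    simp only [map_mul, map_inv, FreeGroup.lift_apply_of]
    simp only [Sym.theta, Sym.conj]
    group)

/-- Peiffer equivalence `~_𝔘` on `Υ` : the equivalence relation generated by the pairs
`(x, x ⬝ σ(a)σ(a⁻¹))`. -/
def peifferEquiv (rels : Set (FreeGroup X)) : Ups rels → Ups rels → Prop :=
  Relation.EqvGen fun x y => ∃ a : Sym X rels,
    y = x * sigma rels (FreeMonoid.of a * FreeMonoid.of a.symInv)

/-- The weak dominion of a submonoid `U` of a monoid `S`. -/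
def WDom (S : Type u) [Monoid S] (U : Submonoid S) : Set S :=
  {d | ∀ (G : Type u) [Group G] (f g : S →* G), (∀ u ∈ U, f u = g u) → f d = g d}

/-- The `F`-action on `𝒢(Υ)` determined by `ʷ(μσ(a)) = μσ(ʷa)`. -/
def actF (rels : Set (FreeGroup X)) (w : FreeGroup X) : GUps rels →* GUps rels :=
  PresentedGroup.toGroup (f := fun a => (PresentedGroup.of (Sym.conj w a) : GUps rels)) (by
    rintro x ⟨a, b, rfl⟩
    simp only [map_mul, map_inv, FreeGroup.lift_apply_of]
    have key : Sym.conj w (Sym.conj (Sym.theta a) b) =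
        Sym.conj (Sym.theta (Sym.conj w a)) (Sym.conj w b) := by
      rcases a with ⟨u, r, eps⟩
      cases eps <;> simp [Sym.conj, Sym.theta, mul_assoc]
    rw [key]
    have h2 : (QuotientGroup.mk (FreeGroup.of (Sym.conj w a) * FreeGroup.of (Sym.conj w b) *
        (FreeGroup.of (Sym.conj (Sym.theta (Sym.conj w a)) (Sym.conj w b)) *
          FreeGroup.of (Sym.conj w a))⁻¹) : GUps rels) = 1 :=
      (QuotientGroup.eq_one_iff _).2 (Subgroup.subset_normalClosure ⟨_, _, rfl⟩)
    rw [QuotientGroup.mk_mul, QuotientGroup.mk_inv, QuotientGroup.mk_mul,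
      QuotientGroup.mk_mul] at h2
    exact h2)

/-!
Conjugation in `𝒢(Υ)` by `g` is the `F`-action of `θ̃(g)`, which permutes the generators
`μσ(a)μσ(a⁻¹)` of `𝔘̂`; hence `𝔘̂` is normal. Modulo `𝔘̂` the inverse of `μσ(a)` is `μσ(a⁻¹)`, so every
coset of `𝔘̂` is represented by some `μ(s)`, `s ∈ Υ`. If the coset of `x ∈ Π̃` is `μ(s)𝔘̂`, then
`θ̄(s) = θ̃(x) = 1`, so `s` is an identity `Y`-sequence. The homomorphisms `Υ → 𝒢(Υ)/𝔘̂` given by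
`μ` followed by the projection, and the trivial one, agree on `𝔘`, hence on `s` by weak dominion:
`x ∈ 𝔘̂`.
-/

theorem ker_le_of_forall_mem_WDom {S G : Type u} {H : Type*} [Monoid S] [Group G] [Group H]
    {U : Submonoid S} (μ : S →* G) (θ : G →* H) (N : Subgroup G) [N.Normal]
    (hUN : ∀ u ∈ U, μ u ∈ N) (hNθ : N ≤ θ.ker)
    (hsurj : Function.Surjective ((QuotientGroup.mk' N).comp μ))
    (h : ∀ d ∈ MonoidHom.mker (θ.comp μ), d ∈ WDom S U) : θ.ker ≤ N := by
  intro x hx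
  obtain ⟨s, hs⟩ := hsurj x
  have hθs : θ (μ s) = 1 :=
    calc θ (μ s) = QuotientGroup.lift N θ hNθ ((QuotientGroup.mk' N).comp μ s) :=
          (QuotientGroup.lift_mk' _ _ _).symm
      _ = θ x := by rw [hs, QuotientGroup.lift_mk]
      _ = 1 := hx
  have hs1 := h s hθs (G ⧸ N) ((QuotientGroup.mk' N).comp μ) 1
    fun u hu => (QuotientGroup.eq_one_iff _).2 (hUN u hu)
  rw [hs1] at hs
  exact (QuotientGroup.eq_one_iff x).1 hs.symm

lemma Sym.theta_symInv (a : Sym X rels) : a.symInv.theta = a.theta⁻¹ := by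
  rcases a with ⟨u, r, _ | _⟩ <;> simp [Sym.symInv, Sym.theta] <;> group

lemma mu_sigma_of (a : Sym X rels) :
    mu rels (sigma rels (FreeMonoid.of a)) = PresentedGroup.of a :=
  (Con.lift_mk' _ _).trans (FreeMonoid.lift_eval_of _ _)

lemma thetaBar_sigma_of (a : Sym X rels) :
    thetaBar rels (sigma rels (FreeMonoid.of a)) = a.theta :=
  (Con.lift_mk' _ _).trans (FreeMonoid.lift_eval_of _ _)

lemma thetaTilde_of (a : Sym X rels) : thetaTilde rels (PresentedGroup.of a) = a.theta :=
  PresentedGroup.toGroup.of _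

lemma thetaTilde_comp_mu : (thetaTilde rels).comp (mu rels) = thetaBar rels := by
  ext a
  exact (congrArg _ (mu_sigma_of a)).trans ((thetaTilde_of a).trans (thetaBar_sigma_of a).symm)

lemma actF_of (w : FreeGroup X) (a : Sym X rels) :
    actF rels w (PresentedGroup.of a) = PresentedGroup.of (Sym.conj w a) :=
  PresentedGroup.toGroup.of _

lemma actF_mul (w v : FreeGroup X) :
    actF rels (w * v) = (actF rels w).comp (actF rels v) :=
  PresentedGroup.ext fun a => by simp [actF_of, Sym.conj, mul_assoc]

lemma actF_one : actF rels 1 = MonoidHom.id (GUps rels) :=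
  PresentedGroup.ext fun a => by simp [actF_of, Sym.conj]

lemma of_mul_of (a b : Sym X rels) :
    (PresentedGroup.of a : GUps rels) * PresentedGroup.of b =
      PresentedGroup.of (Sym.conj a.theta b) * PresentedGroup.of a :=
  PresentedGroup.mk_eq_mk_of_mul_inv_mem ⟨a, b, rfl⟩

lemma of_mul_mul_inv_of (a : Sym X rels) (x : GUps rels) :
    PresentedGroup.of a * x * (PresentedGroup.of a)⁻¹ = actF rels a.theta x := by
  have h : (MulAut.conj (PresentedGroup.of a : GUps rels)).toMonoidHom = actF rels a.theta :=
    PresentedGroup.ext fun b => by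
      change PresentedGroup.of a * PresentedGroup.of b * (PresentedGroup.of a)⁻¹ = _
      rw [actF_of, of_mul_of, mul_inv_cancel_right]
  exact DFunLike.congr_fun h x

lemma mul_mul_inv_eq_actF_thetaTilde (g x : GUps rels) :
    g * x * g⁻¹ = actF rels (thetaTilde rels g) x := by
  have hg : g ∈ Subgroup.closure (Set.range PresentedGroup.of) := by simp
  induction hg using Subgroup.closure_induction generalizing x with
  | mem _ ha =>
    obtain ⟨a, rfl⟩ := ha
    rw [of_mul_mul_inv_of, thetaTilde_of]
  | one => simp [actF_one]
  | mul g h _ _ ihg ihh =>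
    rw [map_mul, actF_mul, MonoidHom.comp_apply, ← ihh, ← ihg]
    group
  | inv g _ ih =>
    have hx := ih (actF rels (thetaTilde rels g)⁻¹ x)
    rw [← MonoidHom.comp_apply, ← actF_mul, mul_inv_cancel, actF_one, MonoidHom.id_apply] at hx
    rw [map_inv]
    conv_lhs => rw [← hx]
    group

lemma UUhat_eq_closure : UUhat rels = Subgroup.closure
    (Set.range fun a : Sym X rels => PresentedGroup.of a * PresentedGroup.of a.symInv) := by
  have himage : (mu rels '' (UU rels : Set (Ups rels))) = (Submonoid.closure
      (Set.range fun a : Sym X rels => (PresentedGroup.of a * PresentedGroup.of a.symInv :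
        GUps rels)) : Set (GUps rels)) := by
    rw [UU, ← Submonoid.coe_map, MonoidHom.map_mclosure]
    congr 2
    ext x
    simp [mu_sigma_of, eq_comm]
  rw [UUhat, himage]
  exact le_antisymm (Subgroup.closure_le _ |>.2 (Subgroup.le_closure_toSubmonoid _))
    (Subgroup.closure_mono Submonoid.subset_closure)

lemma UUhat_le_ker_thetaTilde : UUhat rels ≤ (thetaTilde rels).ker := by
  rw [UUhat_eq_closure, Subgroup.closure_le]
  rintro _ ⟨a, rfl⟩
  simp [thetaTilde_of, Sym.theta_symInv]

lemma map_actF_UUhat_le (w : FreeGroup X) : (UUhat rels).map (actF rels w) ≤ UUhat rels := by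
  rw [UUhat_eq_closure, MonoidHom.map_closure, ← Set.range_comp]
  refine Subgroup.closure_mono fun _ ⟨a, ha⟩ => ⟨Sym.conj w a, ?_⟩
  rw [← ha, Function.comp_apply, map_mul, actF_of, actF_of]
  rfl

instance UUhat_normal : (UUhat rels).Normal where
  conj_mem n hn g := by
    rw [mul_mul_inv_eq_actF_thetaTilde]
    exact map_actF_UUhat_le _ ⟨n, hn, rfl⟩

lemma mk_of_symInv_eq_inv (a : Sym X rels) :
    ((PresentedGroup.of a.symInv : GUps rels) : GUps rels ⧸ UUhat rels) =
      ((PresentedGroup.of a : GUps rels) : GUps rels ⧸ UUhat rels)⁻¹ := by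
  refine eq_inv_of_mul_eq_one_right ?_
  rw [← QuotientGroup.mk_mul, QuotientGroup.eq_one_iff, UUhat_eq_closure]
  exact Subgroup.subset_closure ⟨a, rfl⟩

lemma mk_comp_mu_surjective :
    Function.Surjective ((QuotientGroup.mk' (UUhat rels)).comp (mu rels)) := by
  have hgen : Subgroup.closure
      (Set.range (QuotientGroup.mk' (UUhat rels) ∘ PresentedGroup.of)) = ⊤ := by
    rw [Set.range_comp, ← MonoidHom.map_closure,
      PresentedGroup.closure_range_of, ← MonoidHom.range_eq_map, MonoidHom.range_eq_top]
    exact QuotientGroup.mk'_surjective _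
  rw [← MonoidHom.mrange_eq_top, eq_top_iff, ← Subgroup.top_toSubmonoid, ← hgen,
    Subgroup.closure_toSubmonoid, Submonoid.closure_le]
  rintro y (⟨a, rfl⟩ | ⟨a, ha⟩)
  · exact ⟨sigma rels (FreeMonoid.of a), by simp [mu_sigma_of]⟩
  · refine ⟨sigma rels (FreeMonoid.of a.symInv), ?_⟩
    rw [← inv_inv y, ← ha]
    simp [mu_sigma_of, mk_of_symInv_eq_inv]

/-- (ii) ⇒ (iii) of Theorem `wdom`: if every identity `Y`-sequence lies in the weak
dominion of `𝔘`, then the generalized module of identities `Π̃ = ker θ̃` equals `𝔘̂`. -/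
theorem ker_thetaTilde_eq_UUhat (rels : Set (FreeGroup X))
    (h : ∀ d ∈ MonoidHom.mker (thetaBar rels), d ∈ WDom (Ups rels) (UU rels)) :
    (thetaTilde rels).ker = UUhat rels := by
  refine le_antisymm ?_ UUhat_le_ker_thetaTilde
  refine ker_le_of_forall_mem_WDom (mu rels) (thetaTilde rels) (UUhat rels)
    (fun u hu => Subgroup.subset_closure ⟨u, hu, rfl⟩) UUhat_le_ker_thetaTilde
    mk_comp_mu_surjective ?_
  rwa [thetaTilde_comp_mu]

end Wh
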